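/- arXiv:1903.02398 — 5 statements merged into one kernel-verified Lean document; each statement's English description precedes it below -/
import Mathlib

section
/- Let ā ∈ (−√2, √2) with ā ≠ 0, set s = √(2 − ā²), J = [[0, −1, −1], [1, ā, 0], [1, 0, −ā]], and P = [[1, −ā/s, 1], [0, 1/s, −1/ā], [ā, −(ā²−1)/s, 1/ā]] (real 3×3 matrices). Then P is invertible and P⁻¹ · J · P = [[0, −s, 0], [s, 0, 0], [0, 0, 0]]; that is, the linear change of variables x = Z̄ − ā·Ȳ/s + X̄, y = Ȳ/s − Z̄/ā, z = Z̄/ā − (ā²−1)·Ȳ/s + ā·X̄ brings the linear part of the Rössler system with parameters (ā, 1, ā) at the origin into its real Jordan normal form. -/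
noncomputable section

theorem rossler_caseA_jordan_form (abar : ℝ)
    (habar : abar ∈ Set.Ioo (-Real.sqrt 2) (Real.sqrt 2)) (habar0 : abar ≠ 0) :
    IsUnit (!![1, -abar / Real.sqrt (2 - abar ^ 2), 1;
        0, 1 / Real.sqrt (2 - abar ^ 2), -(1 / abar);
        abar, -((abar ^ 2 - 1) / Real.sqrt (2 - abar ^ 2)), 1 / abar] :
        Matrix (Fin 3) (Fin 3) ℝ).det ∧
    (!![1, -abar / Real.sqrt (2 - abar ^ 2), 1;
        0, 1 / Real.sqrt (2 - abar ^ 2), -(1 / abar);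
        abar, -((abar ^ 2 - 1) / Real.sqrt (2 - abar ^ 2)), 1 / abar] :
        Matrix (Fin 3) (Fin 3) ℝ)⁻¹ *
      (!![0, -1, -1; 1, abar, 0; 1, 0, -abar] : Matrix (Fin 3) (Fin 3) ℝ) *
      (!![1, -abar / Real.sqrt (2 - abar ^ 2), 1;
        0, 1 / Real.sqrt (2 - abar ^ 2), -(1 / abar);
        abar, -((abar ^ 2 - 1) / Real.sqrt (2 - abar ^ 2)), 1 / abar] :
        Matrix (Fin 3) (Fin 3) ℝ) =
      (!![0, -Real.sqrt (2 - abar ^ 2), 0;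
          Real.sqrt (2 - abar ^ 2), 0, 0;
          0, 0, 0] : Matrix (Fin 3) (Fin 3) ℝ) := by
  have ha2 : abar ^ 2 < 2 := by
    have h := sq_lt_sq' habar.1 habar.2
    rwa [Real.sq_sqrt (by norm_num : (2:ℝ) ≥ 0)] at h
  have hpos : (0:ℝ) < 2 - abar ^ 2 := by linarith
  set s := Real.sqrt (2 - abar ^ 2) with hs
  have hs2 : s ^ 2 = 2 - abar ^ 2 := Real.sq_sqrt hpos.le
  have hsne : s ≠ 0 := by positivity
  set P : Matrix (Fin 3) (Fin 3) ℝ :=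
    !![1, -abar / s, 1; 0, 1 / s, -(1 / abar);
       abar, -((abar ^ 2 - 1) / s), 1 / abar] with hP
  have hdet : P.det = s / abar := by
    rw [hP, Matrix.det_fin_three]
    simp [Matrix.vecHead, Matrix.vecTail]
    field_simp
    linear_combination -hs2
  have hdetne : P.det ≠ 0 := by
    rw [hdet]; exact div_ne_zero hsne habar0
  have hunit : IsUnit P.det := isUnit_iff_ne_zero.mpr hdetne
  refine ⟨hunit, ?_⟩
  have key : (!![0, -1, -1; 1, abar, 0; 1, 0, -abar] : Matrix (Fin 3) (Fin 3) ℝ) * P =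
      P * (!![0, -s, 0; s, 0, 0; 0, 0, 0] : Matrix (Fin 3) (Fin 3) ℝ) := by
    rw [hP]
    ext i j
    fin_cases i <;> fin_cases j <;>
      simp [Matrix.mul_apply, Fin.sum_univ_three, Matrix.vecHead, Matrix.vecTail] <;>
      field_simp <;>
      first
        | ring1
        | linear_combination hs2
        | linear_combination -hs2
        | linear_combination (abar * s) * hs2
  calc P⁻¹ * !![0, -1, -1; 1, abar, 0; 1, 0, -abar] * P
      = P⁻¹ * (!![0, -1, -1; 1, abar, 0; 1, 0, -abar] * P) := by rw [Matrix.mul_assoc]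
    _ = P⁻¹ * (P * !![0, -s, 0; s, 0, 0; 0, 0, 0]) := by rw [key]
    _ = (P⁻¹ * P) * !![0, -s, 0; s, 0, 0; 0, 0, 0] := by rw [Matrix.mul_assoc]
    _ = !![0, -s, 0; s, 0, 0; 0, 0, 0] := by
        rw [Matrix.nonsing_inv_mul P hunit, Matrix.one_mul]
end
end

section
/- Let ā ∈ (−√2, √2) with ā ≠ 0 and let α, β ∈ ℝ with β ≠ 0. For γ ∈ ℝ consider the monic quadratic polynomial p_γ(λ) = λ² − ((ā²−2)³·(β·ā − α + γ)/(ā²·(2−ā²)^{7/2}))·λ − ((α + β·ā³ − β·ā − γ)·(α·ā² − α − ā²·γ + β·ā + γ))/(ā²·(ā²−2)³) over ℂ. Then at γ = γ̄ := α − ā·β the linear coefficient of p_γ̄ vanishes, its constant coefficient equals β²·ā⁴/(2−ā²)³ > 0, and the two roots of p_γ̄ are ±i·ω0, where ω0 = |β|·ā²/(2−ā²)^{3/2} > 0. -/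
noncomputable section

theorem rossler_caseA_pure_imaginary_eigenvalues
    (abar α β : ℝ)
    (habar : abar ∈ Set.Ioo (-Real.sqrt 2) (Real.sqrt 2)) (habar0 : abar ≠ 0)
    (hβ : β ≠ 0) :
    -((abar ^ 2 - 2) ^ 3 * (β * abar - α + (α - abar * β)) /
        (abar ^ 2 * (2 - abar ^ 2) ^ ((7 : ℝ) / 2))) = 0 ∧
    -((α + β * abar ^ 3 - β * abar - (α - abar * β)) *
        (α * abar ^ 2 - α - abar ^ 2 * (α - abar * β) + β * abar + (α - abar * β)) /
        (abar ^ 2 * (abar ^ 2 - 2) ^ 3)) =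
      β ^ 2 * abar ^ 4 / (2 - abar ^ 2) ^ 3 ∧
    0 < β ^ 2 * abar ^ 4 / (2 - abar ^ 2) ^ 3 ∧
    0 < |β| * abar ^ 2 / (2 - abar ^ 2) ^ ((3 : ℝ) / 2) ∧
    (∀ z : ℂ,
      z ^ 2 -
        (((abar ^ 2 - 2) ^ 3 * (β * abar - α + (α - abar * β)) /
          (abar ^ 2 * (2 - abar ^ 2) ^ ((7 : ℝ) / 2)) : ℝ) : ℂ) * z -
        (((α + β * abar ^ 3 - β * abar - (α - abar * β)) *
          (α * abar ^ 2 - α - abar ^ 2 * (α - abar * β) + β * abar + (α - abar * β)) /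
          (abar ^ 2 * (abar ^ 2 - 2) ^ 3) : ℝ) : ℂ) = 0 ↔
      z = Complex.I * ((|β| * abar ^ 2 / (2 - abar ^ 2) ^ ((3 : ℝ) / 2) : ℝ) : ℂ) ∨
      z = -(Complex.I * ((|β| * abar ^ 2 / (2 - abar ^ 2) ^ ((3 : ℝ) / 2) : ℝ) : ℂ))) := by
  obtain ⟨h1, h2⟩ := habar
  have hs : Real.sqrt 2 ^ 2 = 2 := Real.sq_sqrt (by norm_num)
  have ht : 0 < 2 - abar ^ 2 := by nlinarith [Real.sqrt_nonneg 2]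
  have ht' : (2 - abar ^ 2) ≠ 0 := ne_of_gt ht
  have ht3 : (abar ^ 2 - 2) ^ 3 ≠ 0 := pow_ne_zero _ (by intro h; apply ht'; linarith)
  have hnum : β * abar - α + (α - abar * β) = 0 := by ring
  have c1 : -((abar ^ 2 - 2) ^ 3 * (β * abar - α + (α - abar * β)) /
        (abar ^ 2 * (2 - abar ^ 2) ^ ((7 : ℝ) / 2))) = 0 := by
    rw [hnum]; simp
  have c2 : -((α + β * abar ^ 3 - β * abar - (α - abar * β)) *
        (α * abar ^ 2 - α - abar ^ 2 * (α - abar * β) + β * abar + (α - abar * β)) /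
        (abar ^ 2 * (abar ^ 2 - 2) ^ 3)) =
      β ^ 2 * abar ^ 4 / (2 - abar ^ 2) ^ 3 := by
    field_simp [show abar ^ 2 - 2 ≠ 0 from fun h => ht' (by linarith)]
    ring
  have hωpos : 0 < |β| * abar ^ 2 / (2 - abar ^ 2) ^ ((3 : ℝ) / 2) := by
    apply div_pos
    · exact mul_pos (abs_pos.mpr hβ) (by positivity)
    · exact Real.rpow_pos_of_pos ht _
  have hc3 : 0 < β ^ 2 * abar ^ 4 / (2 - abar ^ 2) ^ 3 := by positivity
  refine ⟨c1, c2, hc3, hωpos, ?_⟩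
  intro z
  set ω : ℝ := |β| * abar ^ 2 / (2 - abar ^ 2) ^ ((3 : ℝ) / 2) with hω
  have hωsq : ω ^ 2 = β ^ 2 * abar ^ 4 / (2 - abar ^ 2) ^ 3 := by
    rw [hω, div_pow, mul_pow, sq_abs]
    congr 1
    · ring
    · rw [← Real.rpow_natCast ((2 - abar ^ 2) ^ ((3 : ℝ) / 2)) 2,
        ← Real.rpow_mul ht.le, ← Real.rpow_natCast (2 - abar ^ 2) 3]
      norm_num
  have e2 : ((α + β * abar ^ 3 - β * abar - (α - abar * β)) *
          (α * abar ^ 2 - α - abar ^ 2 * (α - abar * β) + β * abar + (α - abar * β)) /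
          (abar ^ 2 * (abar ^ 2 - 2) ^ 3)) = -(ω ^ 2) := by
    rw [hωsq]; linarith [c2]
  have e1 : ((abar ^ 2 - 2) ^ 3 * (β * abar - α + (α - abar * β)) /
          (abar ^ 2 * (2 - abar ^ 2) ^ ((7 : ℝ) / 2))) = 0 := by
    rw [hnum]; simp
  rw [e1, e2]
  have key : z ^ 2 - ((0 : ℝ) : ℂ) * z - ((-(ω ^ 2) : ℝ) : ℂ) =
      (z - Complex.I * (ω : ℂ)) * (z + Complex.I * (ω : ℂ)) := by
    push_cast
    have := Complex.I_sq
    ring_nf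
    rw [Complex.I_sq]
    ring
  rw [key, mul_eq_zero, sub_eq_zero, add_eq_zero_iff_eq_neg]
end
end

section
/- Let ā ∈ (−√2, √2) with ā ≠ 0 and let α, β ∈ ℝ with β ≠ 0. For γ ∈ ℝ consider the monic quadratic polynomial p_γ(λ) = λ² − ((ā²−2)³·(β·ā − α + γ)/(ā²·(2−ā²)^{7/2}))·λ − ((α + β·ā³ − β·ā − γ)·(α·ā² − α − ā²·γ + β·ā + γ))/(ā²·(ā²−2)³) over ℂ, and set γ̄ = α − ā·β. Then there is a neighborhood of γ̄ on which p_γ has two non-real complex-conjugate roots, and on this neighborhood their common real part equals (α − ā·β − γ)/(2·ā²·√(2−ā²)); in particular, the real part of the roots, as a function of γ, is affine with nonzero slope of absolute value 1/(2·ā²·√(2−ā²)), and it vanishes exactly at γ = γ̄. -/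
open Topology

noncomputable section

private lemma quad_roots (b c : ℝ) (h : b ^ 2 + 4 * c < 0) :
    ∃ z : ℂ, z.im ≠ 0 ∧
      (∀ w : ℂ, w ^ 2 - (b : ℂ) * w - (c : ℂ) = 0 ↔ w = z ∨ w = (starRingEnd ℂ) z) ∧
      z.re = b / 2 := by
  set t := Real.sqrt (-(b ^ 2 + 4 * c)) with ht
  have ht0 : 0 < t := Real.sqrt_pos.mpr (by linarith)
  have htt : t ^ 2 = -(b ^ 2 + 4 * c) := Real.sq_sqrt (by linarith)
  refine ⟨⟨b / 2, t / 2⟩, ?_, ?_, rfl⟩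
  · show t / 2 ≠ 0
    positivity
  · intro w
    set z : ℂ := ⟨b / 2, t / 2⟩ with hz
    have hsum : z + (starRingEnd ℂ) z = (b : ℂ) := by
      apply Complex.ext <;> simp [hz]
    have hprod : z * (starRingEnd ℂ) z = (-c : ℂ) := by
      apply Complex.ext
      · simp [hz, Complex.mul_re]
        linear_combination htt / 4
      · simp [hz, Complex.mul_im]
        ring
    have hfact : w ^ 2 - (b : ℂ) * w - (c : ℂ) = (w - z) * (w - (starRingEnd ℂ) z) := by
      linear_combination w * hsum - hprod
    rw [hfact, mul_eq_zero, sub_eq_zero, sub_eq_zero]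

theorem rossler_caseA_transversality_of_real_part
    (abar α β : ℝ)
    (habar : abar ∈ Set.Ioo (-Real.sqrt 2) (Real.sqrt 2)) (habar0 : abar ≠ 0)
    (hβ : β ≠ 0) :
    (∃ U ∈ 𝓝 (α - abar * β), ∀ γ ∈ U, ∃ z : ℂ,
      z.im ≠ 0 ∧
      (∀ w : ℂ,
        w ^ 2 -
          (((abar ^ 2 - 2) ^ 3 * (β * abar - α + γ) /
            (abar ^ 2 * (2 - abar ^ 2) ^ ((7 : ℝ) / 2)) : ℝ) : ℂ) * w -
          (((α + β * abar ^ 3 - β * abar - γ) *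
            (α * abar ^ 2 - α - abar ^ 2 * γ + β * abar + γ) /
            (abar ^ 2 * (abar ^ 2 - 2) ^ 3) : ℝ) : ℂ) = 0 ↔
        w = z ∨ w = (starRingEnd ℂ) z) ∧
      z.re = (α - abar * β - γ) / (2 * abar ^ 2 * Real.sqrt (2 - abar ^ 2)) ∧
      (z.re = 0 ↔ γ = α - abar * β)) ∧
    (∀ γ : ℝ, HasDerivAt
      (fun γ' : ℝ => (α - abar * β - γ') / (2 * abar ^ 2 * Real.sqrt (2 - abar ^ 2)))
      (-(1 / (2 * abar ^ 2 * Real.sqrt (2 - abar ^ 2)))) γ) ∧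
    |(-(1 / (2 * abar ^ 2 * Real.sqrt (2 - abar ^ 2))))| =
      1 / (2 * abar ^ 2 * Real.sqrt (2 - abar ^ 2)) ∧
    1 / (2 * abar ^ 2 * Real.sqrt (2 - abar ^ 2)) ≠ 0 := by
  obtain ⟨hl, hr⟩ := habar
  have hs2 : (0:ℝ) < 2 - abar ^ 2 := by
    have h := sq_lt_sq' hl hr
    rw [Real.sq_sqrt (by norm_num : (0:ℝ) ≤ 2)] at h
    linarith
  have ha2 : (0:ℝ) < abar ^ 2 := by positivity
  have hs : 0 < Real.sqrt (2 - abar ^ 2) := Real.sqrt_pos.mpr hs2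
  set s := Real.sqrt (2 - abar ^ 2) with hsdef
  have hden : (0:ℝ) < 2 * abar ^ 2 * s := by positivity
  have hcubeneg : (abar ^ 2 - 2) ^ 3 < 0 :=
    Odd.pow_neg (by decide) (by linarith)
  have hrpow : (2 - abar ^ 2) ^ ((7:ℝ)/2) = (2 - abar ^ 2) ^ 3 * s := by
    rw [hsdef, Real.sqrt_eq_rpow, ← Real.rpow_natCast (2 - abar ^ 2) 3,
      ← Real.rpow_add hs2]
    norm_num
  set B : ℝ → ℝ := fun γ => (abar ^ 2 - 2) ^ 3 * (β * abar - α + γ) /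
      (abar ^ 2 * (2 - abar ^ 2) ^ ((7:ℝ)/2)) with hBdef
  set C : ℝ → ℝ := fun γ => (α + β * abar ^ 3 - β * abar - γ) *
      (α * abar ^ 2 - α - abar ^ 2 * γ + β * abar + γ) /
      (abar ^ 2 * (abar ^ 2 - 2) ^ 3) with hCdef
  have hB : ∀ γ, B γ = (α - abar * β - γ) / (abar ^ 2 * s) := by
    intro γ
    rw [hBdef]
    simp only
    rw [hrpow]
    rw [div_eq_div_iff (by positivity) (by positivity)]
    ring
  refine ⟨⟨{γ | B γ ^ 2 + 4 * C γ < 0}, ?_, ?_⟩, ?_, ?_, ?_⟩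
  · -- neighborhood
    have hDcont : Continuous fun γ => B γ ^ 2 + 4 * C γ := by
      rw [hBdef, hCdef]
      fun_prop
    have hB0 : B (α - abar * β) = 0 := by
      rw [hB]
      simp
    have hC0 : C (α - abar * β) < 0 := by
      rw [hCdef]
      simp only
      apply div_neg_of_pos_of_neg
      · have : (α + β * abar ^ 3 - β * abar - (α - abar * β)) *
            (α * abar ^ 2 - α - abar ^ 2 * (α - abar * β) + β * abar + (α - abar * β))
            = (β * abar ^ 3) ^ 2 := by ring
        rw [this]
        positivity
      · exact mul_neg_of_pos_of_neg ha2 hcubeneg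
    have hD0 : B (α - abar * β) ^ 2 + 4 * C (α - abar * β) < 0 := by
      rw [hB0]; linarith
    exact hDcont.continuousAt.preimage_mem_nhds (Iio_mem_nhds hD0)
  · intro γ hγ
    have hD : B γ ^ 2 + 4 * C γ < 0 := hγ
    obtain ⟨z, him, hiff, hre⟩ := quad_roots (B γ) (C γ) hD
    have hre' : z.re = (α - abar * β - γ) / (2 * abar ^ 2 * s) := by
      rw [hre, hB]
      ring
    refine ⟨z, him, hiff, hre', ?_⟩
    rw [hre', div_eq_zero_iff]
    constructor
    · rintro (h | h)
      · linarith
      · exact absurd h hden.ne'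
    · intro h
      left
      rw [h]; ring
  · intro γ
    have h0 : HasDerivAt (fun γ' : ℝ => α - abar * β - γ') (-1) γ := by
      simpa using (hasDerivAt_id γ).const_sub (α - abar * β)
    have := h0.div_const (2 * abar ^ 2 * s)
    exact this.congr_deriv (by ring)
  · rw [abs_neg, abs_of_pos (one_div_pos.mpr hden)]
  · exact (one_div_pos.mpr hden).ne'
end
end

section
/- Let ā ∈ (−√2, √2) with ā ≠ 0 and let α, β, γ ∈ ℝ. Define g1 = (g1¹, g1²) : ℝ² → ℝ² by g1¹(r,z) = −π·r·(ā·(β + ā·(α − γ + r·z)) − α + γ)/(2−ā²)^{3/2} and g1²(r,z) = (π/(2−ā²)^{5/2})·( −ā⁴·z·(α − γ + r·z) − 3β·ā³·z + ā²·(r + z·(α−γ)) + 6β·ā·z + 2z·(α − γ + 2r·z) ). If (r,z) ∈ ℝ² satisfies r ≠ 0 and g1(r,z) = (0,0), then the determinant of the Jacobian matrix of g1 at (r,z) equals −4π²·(α + β·ā·(ā²−1) − γ)·(α·(ā²−1) + ā·(β − ā·γ) + γ)/(ā²·(ā²−2)³). -/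
open Real

noncomputable section

/-- First component of the first-order averaged function of the Rössler system
near the zero-Hopf family `(a,b,c) = (ā + εα, 1 + εβ, ā + εγ)`. -/
def g11 (abar α β γ : ℝ) (r z : ℝ) : ℝ :=
  -(π * r * (abar * (β + abar * (α - γ + r * z)) - α + γ)) /
    (2 - abar ^ 2) ^ ((3 : ℝ) / 2)

/-- Second component of the first-order averaged function. -/
def g12 (abar α β γ : ℝ) (r z : ℝ) : ℝ :=
  π / (2 - abar ^ 2) ^ ((5 : ℝ) / 2) *
    (abar ^ 4 * (-z) * (α - γ + r * z) - 3 * β * abar ^ 3 * z +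
      abar ^ 2 * (r + z * (α - γ)) + 6 * β * abar * z + 2 * z * (α - γ + 2 * r * z))

lemma deriv_quad (e a b c x : ℝ) :
    deriv (fun t : ℝ => e * (a * t ^ 2 + b * t + c)) x = e * (2 * a * x + b) := by
  have h : HasDerivAt (fun t : ℝ => e * (a * t ^ 2 + b * t + c)) (e * (2 * a * x + b)) x := by
    have h1 : HasDerivAt (fun t : ℝ => a * t ^ 2 + b * t + c)
        (a * (2 * x ^ 1) + b * 1) x :=
      (((hasDerivAt_pow 2 x).const_mul a).add ((hasDerivAt_id x).const_mul b)).add_const c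
    have h2 := h1.const_mul e
    refine h2.congr_deriv ?_
    ring
  exact h.deriv

theorem rossler_caseA_jacobian_determinant_at_zero
    (abar α β γ : ℝ)
    (habar : abar ∈ Set.Ioo (-Real.sqrt 2) (Real.sqrt 2)) (habar0 : abar ≠ 0)
    (r z : ℝ) (hr : r ≠ 0)
    (hzero : g11 abar α β γ r z = 0 ∧ g12 abar α β γ r z = 0) :
    (!![deriv (fun r' => g11 abar α β γ r' z) r, deriv (fun z' => g11 abar α β γ r z') z;
        deriv (fun r' => g12 abar α β γ r' z) r, deriv (fun z' => g12 abar α β γ r z') z] :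
      Matrix (Fin 2) (Fin 2) ℝ).det =
      -(4 * π ^ 2 * (α + β * abar * (abar ^ 2 - 1) - γ) *
        (α * (abar ^ 2 - 1) + abar * (β - abar * γ) + γ)) /
        (abar ^ 2 * (abar ^ 2 - 2) ^ 3) := by
  obtain ⟨h1, h2⟩ := habar
  have ha2 : abar ^ 2 < 2 := by
    have := sq_lt_sq' h1 h2
    rwa [Real.sq_sqrt (by norm_num : (2:ℝ) ≥ 0)] at this
  have h2pos : (0:ℝ) < 2 - abar ^ 2 := by linarith
  set d3 : ℝ := (2 - abar ^ 2) ^ ((3 : ℝ) / 2) with hd3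
  set d5 : ℝ := (2 - abar ^ 2) ^ ((5 : ℝ) / 2) with hd5
  have d3pos : 0 < d3 := Real.rpow_pos_of_pos h2pos _
  have d5pos : 0 < d5 := Real.rpow_pos_of_pos h2pos _
  have hprod : d3 * d5 = (2 - abar ^ 2) ^ (4 : ℕ) := by
    rw [hd3, hd5, ← Real.rpow_add h2pos, ← Real.rpow_natCast (2 - abar ^ 2) 4]
    norm_num
  -- the four partial derivatives
  have h11r : deriv (fun r' => g11 abar α β γ r' z) r
      = (1 / d3) * (2 * (-(π * abar ^ 2 * z)) * r
          + (-(π * (abar * β + abar ^ 2 * (α - γ) - α + γ)))) := by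
    have hf : (fun r' => g11 abar α β γ r' z)
        = fun t : ℝ => (1 / d3) * ((-(π * abar ^ 2 * z)) * t ^ 2
            + (-(π * (abar * β + abar ^ 2 * (α - γ) - α + γ))) * t + 0) := by
      funext t; simp only [g11, ← hd3]; ring
    rw [hf, deriv_quad]
  have h11z : deriv (fun z' => g11 abar α β γ r z') z
      = (1 / d3) * (2 * 0 * z + (-(π * abar ^ 2 * r ^ 2))) := by
    have hf : (fun z' => g11 abar α β γ r z')
        = fun t : ℝ => (1 / d3) * (0 * t ^ 2 + (-(π * abar ^ 2 * r ^ 2)) * t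
            + (-(π * r * (abar * β + abar ^ 2 * (α - γ) - α + γ)))) := by
      funext t; simp only [g11, ← hd3]; ring
    rw [hf, deriv_quad]
  have h12r : deriv (fun r' => g12 abar α β γ r' z) r
      = (π / d5) * (2 * 0 * r + (abar ^ 2 + (4 - abar ^ 4) * z ^ 2)) := by
    have hf : (fun r' => g12 abar α β γ r' z)
        = fun t : ℝ => (π / d5) * (0 * t ^ 2 + (abar ^ 2 + (4 - abar ^ 4) * z ^ 2) * t
            + (abar ^ 4 * (-z) * (α - γ) - 3 * β * abar ^ 3 * z
              + abar ^ 2 * (z * (α - γ)) + 6 * β * abar * z + 2 * z * (α - γ))) := by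
      funext t; simp only [g12, ← hd5]; ring
    rw [hf, deriv_quad]
  have h12z : deriv (fun z' => g12 abar α β γ r z') z
      = (π / d5) * (2 * (r * (4 - abar ^ 4)) * z
          + (-(abar ^ 4) * (α - γ) - 3 * β * abar ^ 3 + abar ^ 2 * (α - γ)
            + 6 * β * abar + 2 * (α - γ))) := by
    have hf : (fun z' => g12 abar α β γ r z')
        = fun t : ℝ => (π / d5) * ((r * (4 - abar ^ 4)) * t ^ 2
            + (-(abar ^ 4) * (α - γ) - 3 * β * abar ^ 3 + abar ^ 2 * (α - γ)
              + 6 * β * abar + 2 * (α - γ)) * t + abar ^ 2 * r) := by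
      funext t; simp only [g12, ← hd5]; ring
    rw [hf, deriv_quad]
  -- extract the polynomial equations from hzero
  have hP : abar * (β + abar * (α - γ + r * z)) - α + γ = 0 := by
    have h := hzero.1
    rw [g11, ← hd3, div_eq_zero_iff] at h
    rcases h with h | h
    · have := Real.pi_ne_zero
      rcases mul_eq_zero.1 (neg_eq_zero.1 h) with h' | h'
      · rcases mul_eq_zero.1 h' with h'' | h''
        · exact absurd h'' this
        · exact absurd h'' hr
      · exact h'
    · exact absurd h d3pos.ne'
  have hQ : abar ^ 4 * (-z) * (α - γ + r * z) - 3 * β * abar ^ 3 * z +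
      abar ^ 2 * (r + z * (α - γ)) + 6 * β * abar * z + 2 * z * (α - γ + 2 * r * z) = 0 := by
    have h := hzero.2
    rw [g12, ← hd5] at h
    rcases mul_eq_zero.1 h with h' | h'
    · exact absurd h' (div_ne_zero Real.pi_ne_zero d5pos.ne')
    · exact h'
  -- compute the determinant
  rw [Matrix.det_fin_two_of, h11r, h11z, h12r, h12z]
  have hden : abar ^ 2 * (abar ^ 2 - 2) ^ 3 ≠ 0 := by
    apply mul_ne_zero (pow_ne_zero _ habar0)
    exact pow_ne_zero _ (by nlinarith)
  have step1 : (1 / d3) * (2 * (-(π * abar ^ 2 * z)) * r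
          + (-(π * (abar * β + abar ^ 2 * (α - γ) - α + γ)))) *
        ((π / d5) * (2 * (r * (4 - abar ^ 4)) * z
          + (-(abar ^ 4) * (α - γ) - 3 * β * abar ^ 3 + abar ^ 2 * (α - γ)
            + 6 * β * abar + 2 * (α - γ)))) -
      (1 / d3) * (2 * 0 * z + (-(π * abar ^ 2 * r ^ 2))) *
        ((π / d5) * (2 * 0 * r + (abar ^ 2 + (4 - abar ^ 4) * z ^ 2)))
      = (π * ((2 * (-(π * abar ^ 2 * z)) * r
          + (-(π * (abar * β + abar ^ 2 * (α - γ) - α + γ)))) *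
          (2 * (r * (4 - abar ^ 4)) * z
          + (-(abar ^ 4) * (α - γ) - 3 * β * abar ^ 3 + abar ^ 2 * (α - γ)
            + 6 * β * abar + 2 * (α - γ)))
          - (2 * 0 * z + (-(π * abar ^ 2 * r ^ 2))) *
            (2 * 0 * r + (abar ^ 2 + (4 - abar ^ 4) * z ^ 2))))
        / ((2 - abar ^ 2) ^ (4 : ℕ)) := by
    rw [← hprod]
    field_simp
  rw [step1, div_eq_div_iff (by positivity) hden]
  linear_combination
    ((abar ^ 2 - 2) ^ 3 * (-4 * π ^ 2 * abar ^ 2 * (4 - abar ^ 4) * r * z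
      + 6 * π ^ 2 * (abar ^ 2 - 2) * (α + β * abar * (abar ^ 2 - 1) - γ)
      - π ^ 2 * (4 - abar ^ 4) * (abar * β + abar ^ 2 * (α - γ) - (α - γ)))) * hP
    + ((abar ^ 2 - 2) ^ 3 * (π ^ 2 * abar ^ 4 * r)) * hQ
end
end

section
/- (Eigenvalues of perturbed diagonal matrices.) Let n ≥ 1, let r1 < r2 < … < r_j < R be rational numbers with r1 ≥ 0, let Λ1, …, Λ_j be real diagonal n×n matrices, and set Λ(ε) = Σ_{k=1}^{j} ε^{r_k}·Λ_k for ε > 0. Let D : (0, ∞) → Matrix (Fin n) (Fin n) ℝ be continuous and bounded on a right neighborhood of 0, and set C(ε) = Λ(ε) + ε^R·D(ε). Then there exist ε0 > 0 and M > 0 such that for every ε ∈ (0, ε0) the multiset of complex eigenvalues of C(ε) can be enumerated as μ_1(ε), …, μ_n(ε) (with multiplicities) so that |μ_i(ε) − Λ(ε)_{ii}| ≤ M·ε^R for all i = 1, …, n; in particular, each eigenvalue of C(ε) differs from the corresponding diagonal entry of Λ(ε) by O(ε^R). -/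
noncomputable section

open Polynomial Matrix Finset Filter

attribute [local instance] Classical.propDecidable

lemma lift_enum {α γ : Type*} : ∀ {n : ℕ} (f : Fin n → γ) (s : Multiset α) (g : α → γ),
    s.map g = Finset.univ.val.map f →
    ∃ μ : Fin n → α, Finset.univ.val.map μ = s ∧ ∀ i, g (μ i) = f i := by
  intro n
  induction n with
  | zero =>
    intro f s g h
    refine ⟨fun i => i.elim0, ?_, fun i => i.elim0⟩
    have : s.map g = 0 := by simpa using h
    have hs : s = 0 := by rwa [Multiset.map_eq_zero] at this
    simp [hs]
  | succ m IH =>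
    intro f s g h
    classical
    have huniv : (Finset.univ.val : Multiset (Fin (m+1))).map f
        = f 0 ::ₘ (Finset.univ.val : Multiset (Fin m)).map (f ∘ Fin.succ) := by
      rw [Fin.univ_succ, Finset.cons_val, Multiset.map_cons, Finset.map_val, Multiset.map_map]
      rfl
    have hmem : f 0 ∈ s.map g := by rw [h, huniv]; exact Multiset.mem_cons_self _ _
    obtain ⟨a, ha, hga⟩ := Multiset.mem_map.mp hmem
    have hs : s = a ::ₘ s.erase a := (Multiset.cons_erase ha).symm
    have h2 : (s.erase a).map g = (Finset.univ.val : Multiset (Fin m)).map (f ∘ Fin.succ) := by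
      have h3 : g a ::ₘ (s.erase a).map g = f 0 ::ₘ (Finset.univ.val : Multiset (Fin m)).map (f ∘ Fin.succ) := by
        rw [← Multiset.map_cons, ← hs, h, huniv]
      rw [hga] at h3
      exact (Multiset.cons_inj_right _).mp h3
    obtain ⟨μ', hμ'1, hμ'2⟩ := IH (f ∘ Fin.succ) (s.erase a) g h2
    refine ⟨Fin.cons a μ', ?_, ?_⟩
    · rw [Fin.univ_succ, Finset.cons_val, Multiset.map_cons, Fin.cons_zero, Finset.map_val,
        Multiset.map_map]
      have hc : ∀ (e : Fin m ↪ Fin (m+1)), (∀ x, e x = Fin.succ x) →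
          Multiset.map (Fin.cons a μ' ∘ ⇑e) Finset.univ.val = Multiset.map μ' Finset.univ.val := by
        intro e he
        apply Multiset.map_congr rfl
        intro x _
        simp [he x]
      rw [hc _ (fun x => rfl), hμ'1]
      exact (Multiset.cons_erase ha)
    · intro i
      refine Fin.cases ?_ ?_ i
      · simpa using hga
      · intro k
        simpa using hμ'2 k

lemma eval_charpoly' {n : ℕ} (M : Matrix (Fin n) (Fin n) ℂ) (w : ℂ) :
    M.charpoly.eval w = (w • (1 : Matrix (Fin n) (Fin n) ℂ) - M).det := by
  rw [Matrix.charpoly, ← Polynomial.coe_evalRingHom, RingHom.map_det]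
  congr 1
  ext i k
  by_cases h : i = k
  · subst h
    simp [Matrix.charmatrix_apply_eq, Matrix.one_apply_eq]
  · simp [Matrix.charmatrix_apply_ne _ _ _ h, Matrix.one_apply_ne h]

lemma exists_enum {α : Type*} {n : ℕ} (s : Multiset α) (h : s.card = n) :
    ∃ μ : Fin n → α, Finset.univ.val.map μ = s := by
  have hl : s.toList.length = n := by rw [Multiset.length_toList, h]
  refine ⟨fun i => s.toList.get (Fin.cast hl.symm i), ?_⟩
  have h1 : (Finset.univ.val : Multiset (Fin n)) = ↑(List.finRange n) := rfl
  rw [h1, Multiset.map_coe, ← List.ofFn_eq_map]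
  conv_rhs => rw [← s.coe_toList]
  congr 1
  apply List.ext_get (by simpa using hl.symm)
  intro i h1 h2
  simp [List.get_ofFn]

lemma tri3 (x u v y : ℂ) :
    ‖x - y‖ ≤ ‖x - u‖ + ‖u - v‖ + ‖v - y‖ := by
  calc ‖x - y‖ ≤ ‖x - v‖ + ‖v - y‖ := norm_sub_le_norm_sub_add_norm_sub _ _ _
    _ ≤ (‖x - u‖ + ‖u - v‖) + ‖v - y‖ :=
        add_le_add (norm_sub_le_norm_sub_add_norm_sub _ _ _) le_rfl

lemma roots_count_const {n : ℕ} (M : ℝ → Matrix (Fin n) (Fin n) ℂ)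
    (hcont : Continuous M) (a : Fin n → ℝ) (ρ : ℝ) (hρ : 0 < ρ)
    (hger : ∀ t ∈ Set.Icc (0:ℝ) 1, ∀ z ∈ (M t).charpoly.roots,
      ∃ i, ‖z - (a i : ℂ)‖ ≤ ρ)
    (hsep : ∀ i i', a i = a i' ∨ 4 * ρ < |a i - a i'|) (i0 : Fin n) :
    (((M 1).charpoly.roots).filter (fun z => ‖z - (a i0 : ℂ)‖ ≤ ρ)).card
      = (((M 0).charpoly.roots).filter (fun z => ‖z - (a i0 : ℂ)‖ ≤ ρ)).card := by
  have hmonic : ∀ t, (M t).charpoly.Monic := fun t => Matrix.charpoly_monic _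
  have hdeg : ∀ t, (M t).charpoly.natDegree = n := fun t => by
    simpa using (M t).charpoly_natDegree_eq_dim
  have hcard : ∀ t, (M t).charpoly.roots.card = n := fun t => by
    have h := (Polynomial.splits_iff_card_roots.mp
      (IsAlgClosed.splits (M t).charpoly))
    rw [hdeg t] at h
    exact h
  have hprodt : ∀ t, (M t).charpoly
      = ((M t).charpoly.roots.map (fun c => X - C c)).prod := fun t =>
    (IsAlgClosed.splits _).eq_prod_roots_of_monic (hmonic t)
  set N : ℝ → ℕ := fun t =>
    (((M t).charpoly.roots).filter (fun z => ‖z - (a i0 : ℂ)‖ ≤ ρ)).card with hN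
  -- key: local constancy
  have key : ∀ t0 ∈ Set.Icc (0:ℝ) 1, ∀ᶠ t in nhdsWithin t0 (Set.Icc 0 1), N t = N t0 := by
    intro t0 ht0
    by_contra hcon
    have hfreq : ∃ᶠ t in nhdsWithin t0 (Set.Icc 0 1), N t ≠ N t0 :=
      Filter.not_eventually.mp hcon
    have hsel := (Metric.nhdsWithin_basis_ball.frequently_iff).mp hfreq
    have hsel' : ∀ s : ℕ, ∃ t, t ∈ Metric.ball t0 (1/(s+1)) ∩ Set.Icc 0 1 ∧ N t ≠ N t0 := by
      intro s
      exact hsel (1/(s+1)) (by positivity)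
    choose t ht hNt using hsel'
    have htIcc : ∀ s, t s ∈ Set.Icc (0:ℝ) 1 := fun s => (ht s).2
    have httend : Tendsto t atTop (nhds t0) := by
      apply tendsto_iff_dist_tendsto_zero.mpr
      apply squeeze_zero (fun s => dist_nonneg) (fun s => le_of_lt (Metric.mem_ball.mp (ht s).1))
      exact tendsto_one_div_add_atTop_nhds_zero_nat
    -- enumerations of roots
    have henum : ∀ s : ℕ, ∃ μ : Fin n → ℂ,
        Finset.univ.val.map μ = (M (t s)).charpoly.roots :=
      fun s => exists_enum _ (hcard _)
    choose μs hμs using henum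
    have hnen : (Finset.univ : Finset (Fin n)).Nonempty := ⟨i0, Finset.mem_univ _⟩
    set Bnd : ℝ := ρ + Finset.univ.sup' hnen (fun i => |a i|) with hBnd
    have hroot_mem : ∀ s i, μs s i ∈ (M (t s)).charpoly.roots := by
      intro s i
      rw [← hμs s]
      exact Multiset.mem_map.mpr ⟨i, Finset.mem_val.mpr (Finset.mem_univ _), rfl⟩
    have hbnd : ∀ s, μs s ∈ Set.pi Set.univ (fun _ : Fin n => Metric.closedBall (0:ℂ) Bnd) := by
      intro s
      rw [Set.mem_univ_pi]
      intro i
      obtain ⟨i', hi'⟩ := hger (t s) (htIcc s) _ (hroot_mem s i)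
      rw [Metric.mem_closedBall, Complex.dist_eq, sub_zero]
      calc ‖μs s i‖ ≤ ‖μs s i - (a i' : ℂ)‖ + ‖(a i' : ℂ)‖ := by
            have := norm_sub_le_norm_sub_add_norm_sub (μs s i) (a i' : ℂ) 0
            simpa using this
        _ ≤ ρ + |a i'| := by
            rw [Complex.norm_real, Real.norm_eq_abs]
            exact add_le_add hi' le_rfl
        _ ≤ Bnd := by
            rw [hBnd]
            exact add_le_add le_rfl (Finset.le_sup' (f := fun i => |a i|) (Finset.mem_univ i'))
    have hKcomp : IsCompact (Set.pi Set.univ (fun _ : Fin n => Metric.closedBall (0:ℂ) Bnd)) :=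
      isCompact_univ_pi (fun _ => isCompact_closedBall _ _)
    obtain ⟨z, hzK, φ, hφ, hzlim⟩ := hKcomp.tendsto_subseq hbnd
    have hzi : ∀ i, Tendsto (fun s => μs (φ s) i) atTop (nhds (z i)) := by
      intro i
      exact (tendsto_pi_nhds.mp hzlim i)
    have httend' : Tendsto (fun s => t (φ s)) atTop (nhds t0) :=
      httend.comp hφ.tendsto_atTop
    have hevalprod : ∀ s w, (M (t s)).charpoly.eval w = ∏ i, (w - μs s i) := by
      intro s w
      rw [hprodt (t s), ← hμs s, Multiset.map_map, Polynomial.eval_multiset_prod,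
        Multiset.map_map, Finset.prod_eq_multiset_prod]
      apply congrArg Multiset.prod
      apply Multiset.map_congr rfl
      intro x _
      simp
    have hkey : (M t0).charpoly = ∏ i, (X - C (z i)) := by
      apply Polynomial.funext
      intro w
      have h1 : Tendsto (fun s => (w • (1 : Matrix (Fin n) (Fin n) ℂ) - M (t (φ s))).det)
          atTop (nhds ((w • (1 : Matrix (Fin n) (Fin n) ℂ) - M t0).det)) := by
        have hc : Continuous fun u => (w • (1 : Matrix (Fin n) (Fin n) ℂ) - M u).det :=
          (continuous_const.sub hcont).matrix_det
        exact (hc.tendsto t0).comp httend'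
      have h2 : Tendsto (fun s => ∏ i, (w - μs (φ s) i)) atTop (nhds (∏ i, (w - z i))) :=
        tendsto_finset_prod _ (fun i _ => tendsto_const_nhds.sub (hzi i))
      have heq : (fun s => (w • (1 : Matrix (Fin n) (Fin n) ℂ) - M (t (φ s))).det)
          = fun s => ∏ i, (w - μs (φ s) i) := by
        funext s
        rw [← eval_charpoly', hevalprod]
      rw [heq] at h1
      have huniq := tendsto_nhds_unique h1 h2
      rw [eval_charpoly', huniq, Polynomial.eval_prod]
      simp
    have hroots0 : (M t0).charpoly.roots = Finset.univ.val.map z := by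
      have h4 : ∏ i, (X - C (z i)) = ((Finset.univ.val.map z).map (fun c => X - C c)).prod := by
        rw [Multiset.map_map, Finset.prod_eq_multiset_prod]
        rfl
      rw [hkey, h4, Polynomial.roots_multiset_prod_X_sub_C]
    have hzroot : ∀ i, z i ∈ (M t0).charpoly.roots := by
      intro i
      rw [hroots0]
      exact Multiset.mem_map.mpr ⟨i, Finset.mem_val.mpr (Finset.mem_univ _), rfl⟩
    have hev : ∀ᶠ s in atTop, ∀ i : Fin n, ‖μs (φ s) i - z i‖ < ρ := by
      refine Filter.eventually_all.mpr fun i => ?_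
      filter_upwards [Metric.tendsto_nhds.mp (hzi i) ρ hρ] with s hs
      rwa [Complex.dist_eq] at hs
    obtain ⟨s0, hs0⟩ := hev.exists
    have habs : ∀ i i' : Fin n, ‖(a i' : ℂ) - (a i : ℂ)‖ = |a i' - a i| := by
      intro i i'
      rw [show ((a i' : ℂ) - (a i : ℂ)) = ((a i' - a i : ℝ) : ℂ) by push_cast; ring,
        Complex.norm_real, Real.norm_eq_abs]
    have hiff : ∀ i : Fin n,
        (‖μs (φ s0) i - (a i0 : ℂ)‖ ≤ ρ ↔ ‖z i - (a i0 : ℂ)‖ ≤ ρ) := by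
      intro i
      have hclose : ‖μs (φ s0) i - z i‖ < ρ := hs0 i
      constructor
      · intro h
        obtain ⟨i', hi'⟩ := hger t0 ht0 (z i) (hzroot i)
        rcases hsep i' i0 with he | hlt
        · rw [show ((a i0 : ℝ) : ℂ) = ((a i' : ℝ) : ℂ) by rw [he]]
          exact hi'
        · exfalso
          have e1 : ‖(a i' : ℂ) - (a i0 : ℂ)‖ ≤ ρ + ρ + ρ := by
            calc ‖(a i' : ℂ) - (a i0 : ℂ)‖
                ≤ ‖(a i' : ℂ) - z i‖ + ‖z i - μs (φ s0) i‖
                  + ‖μs (φ s0) i - (a i0 : ℂ)‖ := tri3 _ _ _ _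
              _ ≤ ρ + ρ + ρ := by
                  refine add_le_add (add_le_add ?_ ?_) h
                  · rw [norm_sub_rev]
                    exact hi'
                  · rw [norm_sub_rev]
                    exact hclose.le
          rw [habs] at e1
          linarith
      · intro h
        obtain ⟨i', hi'⟩ := hger (t (φ s0)) (htIcc _) _ (hroot_mem (φ s0) i)
        rcases hsep i' i0 with he | hlt
        · rw [show ((a i0 : ℝ) : ℂ) = ((a i' : ℝ) : ℂ) by rw [he]]
          exact hi'
        · exfalso
          have e1 : ‖(a i' : ℂ) - (a i0 : ℂ)‖ ≤ ρ + ρ + ρ := by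
            calc ‖(a i' : ℂ) - (a i0 : ℂ)‖
                ≤ ‖(a i' : ℂ) - μs (φ s0) i‖ + ‖μs (φ s0) i - z i‖
                  + ‖z i - (a i0 : ℂ)‖ := tri3 _ _ _ _
              _ ≤ ρ + ρ + ρ := by
                  refine add_le_add (add_le_add ?_ hclose.le) h
                  rw [norm_sub_rev]
                  exact hi'
          rw [habs] at e1
          linarith
    have hNs0 : N (t (φ s0)) = N t0 := by
      simp only [hN]
      rw [← hμs (φ s0), hroots0, Multiset.filter_map, Multiset.filter_map,
        Multiset.card_map, Multiset.card_map]
      congr 1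
      apply Multiset.filter_congr
      intro x _
      exact hiff x
    exact hNt (φ s0) hNs0
  have hNc : ContinuousOn N (Set.Icc (0:ℝ) 1) := by
    intro t0 ht0
    unfold ContinuousWithinAt
    rw [show (nhds (N t0)) = pure (N t0) from by rw [nhds_discrete], Filter.tendsto_pure]
    exact key t0 ht0
  have himg := (isPreconnected_Icc (a := (0:ℝ)) (b := 1)).image N hNc
  have hsub := himg.subsingleton
  exact hsub ⟨1, Set.mem_Icc.mpr ⟨by norm_num, le_rfl⟩, rfl⟩
    ⟨0, Set.mem_Icc.mpr ⟨le_rfl, by norm_num⟩, rfl⟩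

lemma gersh {n : ℕ} (M : Matrix (Fin n) (Fin n) ℂ) {μ : ℂ} (hμ : μ ∈ M.charpoly.roots) :
    ∃ i, ‖μ - M i i‖ ≤ ∑ i' ∈ Finset.univ.erase i, ‖M i i'‖ := by
  have hroot : M.charpoly.eval μ = 0 := (Polynomial.isRoot_of_mem_roots hμ)
  rw [eval_charpoly'] at hroot
  obtain ⟨v, hv0, hv⟩ := Matrix.exists_mulVec_eq_zero_iff.mpr hroot
  have hev : M *ᵥ v = μ • v := by
    have := hv
    rw [Matrix.sub_mulVec, sub_eq_zero] at this
    rw [← this, Matrix.smul_mulVec, Matrix.one_mulVec]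
  have heig : Module.End.HasEigenvalue (Matrix.toLin' M) μ := by
    apply Module.End.hasEigenvalue_of_hasEigenvector (x := v)
    refine ⟨?_, hv0⟩
    rw [Module.End.mem_eigenspace_iff, Matrix.toLin'_apply, hev]
  obtain ⟨i, hi⟩ := eigenvalue_mem_ball heig
  refine ⟨i, ?_⟩
  rw [Metric.mem_closedBall, Complex.dist_eq] at hi
  simpa using hi

lemma rpow_tendsto_zero {c : ℝ} (hc : 0 < c) :
    Tendsto (fun x : ℝ => x ^ c) (nhdsWithin 0 (Set.Ioi 0)) (nhds 0) := by
  have : ContinuousAt (fun x : ℝ => x ^ c) 0 :=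
    Real.continuousAt_rpow_const 0 c (Or.inr hc.le)
  have h := this.tendsto.mono_left (nhdsWithin_le_nhds (s := Set.Ioi 0))
  simpa [Real.zero_rpow hc.ne'] using h

lemma rpow_tendsto_atTop {c : ℝ} (hc : c < 0) :
    Tendsto (fun x : ℝ => x ^ c) (nhdsWithin 0 (Set.Ioi 0)) atTop := by
  have h1 : Tendsto (fun x : ℝ => x ^ (-c)) (nhdsWithin 0 (Set.Ioi 0))
      (nhdsWithin 0 (Set.Ioi 0)) := by
    rw [tendsto_nhdsWithin_iff]
    constructor
    · exact rpow_tendsto_zero (by linarith)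
    · filter_upwards [self_mem_nhdsWithin] with x hx
      exact Real.rpow_pos_of_pos hx _
  have h2 := tendsto_inv_nhdsGT_zero.comp h1
  apply h2.congr'
  filter_upwards [self_mem_nhdsWithin] with x hx
  simp only [Function.comp_apply]
  rw [← Real.rpow_neg (le_of_lt hx), neg_neg]

lemma habs' (x y : ℝ) : ‖(x : ℂ) - (y : ℂ)‖ = |x - y| := by
  rw [show ((x : ℂ) - (y : ℂ)) = ((x - y : ℝ) : ℂ) by push_cast; ring, Complex.norm_real, Real.norm_eq_abs]

lemma main_count {n : ℕ} (hn : 1 ≤ n) (a : Fin n → ℝ) (B : Matrix (Fin n) (Fin n) ℝ)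
    (K e : ℝ) (hK : 0 < K) (he : 0 < e) (hB : ∀ i i', |B i i'| ≤ K)
    (hsep : ∀ i i', a i = a i' ∨ 4 * (n * K * e) < |a i - a i'|) :
    ∃ μ : Fin n → ℂ,
      ((Matrix.diagonal a + e • B).map (algebraMap ℝ ℂ)).charpoly.roots
        = Finset.univ.val.map μ ∧
      ∀ i, ‖μ i - (a i : ℂ)‖ ≤ (n * K) * e := by
  set ρ : ℝ := n * K * e with hρdef
  have hρ : 0 < ρ := by
    have : (0:ℝ) < n := by exact_mod_cast Nat.lt_of_lt_of_le Nat.zero_lt_one hn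
    positivity
  set M : ℝ → Matrix (Fin n) (Fin n) ℂ :=
    fun t => (Matrix.diagonal a + (t * e) • B).map (algebraMap ℝ ℂ) with hMdef
  have hM1 : M 1 = (Matrix.diagonal a + e • B).map (algebraMap ℝ ℂ) := by
    simp [hMdef]
  have hMapp : ∀ t i i', M t i i'
      = (((Matrix.diagonal a) i i' + t * e * B i i' : ℝ) : ℂ) := by
    intro t i i'
    simp [hMdef, Matrix.map_apply, Matrix.add_apply, Matrix.smul_apply, smul_eq_mul,
      Complex.coe_algebraMap]
  have hcont : Continuous M := by
    apply continuous_matrix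
    intro i i'
    simp only [hMdef, Matrix.map_apply, Matrix.add_apply, Matrix.smul_apply, smul_eq_mul,
      Complex.coe_algebraMap]
    exact Complex.continuous_ofReal.comp (by fun_prop)
  have hger : ∀ t ∈ Set.Icc (0:ℝ) 1, ∀ z ∈ (M t).charpoly.roots,
      ∃ i, ‖z - (a i : ℂ)‖ ≤ ρ := by
    intro t ht z hz
    obtain ⟨i, hi⟩ := gersh (M t) hz
    refine ⟨i, ?_⟩
    have hdiag : M t i i = ((a i + t * e * B i i : ℝ) : ℂ) := by
      rw [hMapp]
      simp [Matrix.diagonal_apply_eq]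
    have hterm : ∀ i' ∈ Finset.univ.erase i, ‖M t i i'‖ ≤ e * K := by
      intro i' hi'
      have hne : i' ≠ i := Finset.ne_of_mem_erase hi'
      rw [hMapp, Matrix.diagonal_apply_ne' _ hne]
      rw [zero_add, Complex.norm_real, Real.norm_eq_abs, abs_mul, abs_mul]
      calc |t| * |e| * |B i i'| ≤ 1 * |e| * K := by
            apply mul_le_mul ?_ (hB i i') (abs_nonneg _) (by positivity)
            apply mul_le_mul ?_ le_rfl (abs_nonneg _) zero_le_one
            rw [abs_le]
            exact ⟨by linarith [ht.1], ht.2⟩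
        _ = e * K := by rw [one_mul, abs_of_pos he]
    have hsum : ∑ i' ∈ Finset.univ.erase i, ‖M t i i'‖ ≤ (n - 1 : ℝ) * (e * K) := by
      calc ∑ i' ∈ Finset.univ.erase i, ‖M t i i'‖
          ≤ ∑ _i' ∈ Finset.univ.erase i, (e * K) := Finset.sum_le_sum hterm
        _ = ((Finset.univ.erase i).card : ℝ) * (e * K) := by rw [Finset.sum_const, nsmul_eq_mul]
        _ = (n - 1 : ℝ) * (e * K) := by
            rw [Finset.card_erase_of_mem (Finset.mem_univ _), Finset.card_univ, Fintype.card_fin]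
            congr 1
            have : (1:ℕ) ≤ n := hn
            push_cast [Nat.cast_sub this]
            ring
    have hdd : ‖M t i i - (a i : ℂ)‖ ≤ e * K := by
      rw [hdiag]
      rw [show (((a i + t * e * B i i : ℝ) : ℂ) - (a i : ℂ)) = ((t * e * B i i : ℝ) : ℂ) by
        push_cast; ring]
      rw [Complex.norm_real, Real.norm_eq_abs, abs_mul, abs_mul]
      calc |t| * |e| * |B i i| ≤ 1 * |e| * K := by
            apply mul_le_mul ?_ (hB i i) (abs_nonneg _) (by positivity)
            apply mul_le_mul ?_ le_rfl (abs_nonneg _) zero_le_one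
            rw [abs_le]; exact ⟨by linarith [ht.1], ht.2⟩
        _ = e * K := by rw [one_mul, abs_of_pos he]
    calc ‖z - (a i : ℂ)‖
        ≤ ‖z - M t i i‖ + ‖M t i i - (a i : ℂ)‖ :=
          norm_sub_le_norm_sub_add_norm_sub _ _ _
      _ ≤ (n - 1 : ℝ) * (e * K) + e * K := add_le_add (le_trans hi hsum) hdd
      _ = ρ := by rw [hρdef]; ring
  -- roots of M 0
  have h0 : (M 0).charpoly.roots = Finset.univ.val.map (fun i => ((a i : ℝ) : ℂ)) := by
    have hM0 : M 0 = Matrix.diagonal (fun i => ((a i : ℝ) : ℂ)) := by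
      rw [hMdef]
      simp only [zero_mul, zero_smul, add_zero]
      rw [Matrix.diagonal_map (by simp)]
      rfl
    have hcm : charmatrix (M 0) = Matrix.diagonal (fun i => (X - C ((a i : ℝ) : ℂ))) := by
      rw [hM0]
      ext i k
      by_cases h : i = k
      · subst h
        simp [charmatrix_apply_eq, Matrix.diagonal_apply_eq]
      · simp [charmatrix_apply_ne _ _ _ h, Matrix.diagonal_apply_ne _ h]
    have hcp : (M 0).charpoly = ∏ i, (X - C ((a i : ℝ) : ℂ)) := by
      rw [Matrix.charpoly, hcm, Matrix.det_diagonal]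
    rw [hcp]
    have h4 : ∏ i, (X - C ((a i:ℝ) : ℂ))
        = ((Finset.univ.val.map (fun i => ((a i:ℝ) : ℂ))).map (fun c => X - C c)).prod := by
      rw [Multiset.map_map, Finset.prod_eq_multiset_prod]
      rfl
    rw [h4, Polynomial.roots_multiset_prod_X_sub_C]
  -- counts
  have hcount : ∀ i0 : Fin n,
      (((M 1).charpoly.roots).filter (fun z => ‖z - (a i0 : ℂ)‖ ≤ ρ)).card
        = (Finset.univ.val.filter (fun i => a i = a i0)).card := by
    intro i0
    rw [roots_count_const M hcont a ρ hρ hger hsep i0, h0, Multiset.filter_map,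
      Multiset.card_map]
    congr 1
    apply Multiset.filter_congr
    intro i _
    simp only [Function.comp_apply]
    rw [habs']
    constructor
    · intro h
      rcases hsep i i0 with heq | hlt
      · exact heq
      · exfalso
        have : ρ ≤ 4 * ρ := by linarith
        linarith
    · intro h
      rw [h]
      simp [hρ.le]
  -- the class-labeling function
  set cls : ℂ → ℝ := fun x =>
    if h : ∃ i, ‖x - (a i : ℂ)‖ ≤ ρ then a h.choose else 0 with hclsdef
  have h01 : (1:ℝ) ∈ Set.Icc (0:ℝ) 1 := Set.mem_Icc.mpr ⟨zero_le_one, le_rfl⟩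
  have hcls : ∀ x ∈ (M 1).charpoly.roots, ∃ w,
      cls x = a w ∧ ‖x - (a w : ℂ)‖ ≤ ρ := by
    intro x hx
    have hex : ∃ i, ‖x - (a i : ℂ)‖ ≤ ρ := hger 1 h01 x hx
    refine ⟨hex.choose, ?_, hex.choose_spec⟩
    rw [hclsdef]
    simp only
    rw [dif_pos hex]
  have hclsiff : ∀ (i1 : Fin n), ∀ x ∈ (M 1).charpoly.roots,
      (cls x = a i1 ↔ ‖x - (a i1 : ℂ)‖ ≤ ρ) := by
    intro i1 x hx
    obtain ⟨w, hw1, hw2⟩ := hcls x hx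
    constructor
    · intro h
      have haw : a w = a i1 := by rw [← hw1, h]
      rw [show ((a i1 : ℝ) : ℂ) = ((a w : ℝ) : ℂ) by rw [haw]]
      exact hw2
    · intro h
      rw [hw1]
      rcases hsep w i1 with heq | hlt
      · exact heq
      · exfalso
        have e1 : ‖(a w : ℂ) - (a i1 : ℂ)‖ ≤ ρ + ρ := by
          calc ‖(a w : ℂ) - (a i1 : ℂ)‖
              ≤ ‖(a w : ℂ) - x‖ + ‖x - (a i1 : ℂ)‖ :=
                norm_sub_le_norm_sub_add_norm_sub _ _ _
            _ ≤ ρ + ρ := by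
                refine add_le_add ?_ h
                rw [norm_sub_rev]
                exact hw2
        rw [habs'] at e1
        linarith
  -- the multiset map equality
  have hmap : (M 1).charpoly.roots.map cls = Finset.univ.val.map a := by
    apply Multiset.ext.mpr
    intro c
    rw [Multiset.count_map, Multiset.count_map]
    by_cases hc : ∃ i1 : Fin n, a i1 = c
    · obtain ⟨i1, hi1⟩ := hc
      subst hi1
      have hL : ((M 1).charpoly.roots.filter (fun x => a i1 = cls x))
          = ((M 1).charpoly.roots.filter (fun z => ‖z - (a i1 : ℂ)‖ ≤ ρ)) := by
        apply Multiset.filter_congr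
        intro x hx
        rw [eq_comm]
        exact hclsiff i1 x hx
      rw [hL, hcount i1]
      congr 1
      apply Multiset.filter_congr
      intro i _
      exact ⟨fun h => h.symm, fun h => h.symm⟩
    · have hL : ((M 1).charpoly.roots.filter (fun x => c = cls x)) = 0 := by
        rw [Multiset.filter_eq_nil]
        intro x hx hcx
        obtain ⟨w, hw1, _⟩ := hcls x hx
        exact hc ⟨w, by rw [← hw1, ← hcx]⟩
      have hR : (Finset.univ.val.filter (fun i => c = a i)) = 0 := by
        rw [Multiset.filter_eq_nil]
        intro i _ hci
        exact hc ⟨i, hci.symm⟩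
      rw [hL, hR]
      rfl
  obtain ⟨μ, hμ1, hμ2⟩ := lift_enum a ((M 1).charpoly.roots) cls hmap
  refine ⟨μ, ?_, ?_⟩
  · rw [← hM1, hμ1]
  · intro i
    have hmem : μ i ∈ (M 1).charpoly.roots := by
      rw [← hμ1]
      exact Multiset.mem_map.mpr ⟨i, Finset.mem_val.mpr (Finset.mem_univ _), rfl⟩
    obtain ⟨w, hw1, hw2⟩ := hcls (μ i) hmem
    have haw : a w = a i := by rw [← hw1, hμ2 i]
    calc ‖μ i - (a i : ℂ)‖
        = ‖μ i - (a w : ℂ)‖ := by rw [haw]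
      _ ≤ ρ := hw2

theorem eigenvalues_of_perturbed_diagonal_matrices
    (n : ℕ) (hn : 1 ≤ n) (j : ℕ) (r : Fin j → ℚ) (R : ℚ)
    (hmono : StrictMono r) (hr0 : ∀ k : Fin j, 0 ≤ r k) (hrR : ∀ k : Fin j, r k < R)
    (Λ : Fin j → Matrix (Fin n) (Fin n) ℝ) (hdiag : ∀ k : Fin j, (Λ k).IsDiag)
    (D : ℝ → Matrix (Fin n) (Fin n) ℝ)
    (hDcont : ContinuousOn D (Set.Ioi 0))
    (hDbdd : ∃ K > (0 : ℝ), ∃ η > (0 : ℝ), ∀ ε ∈ Set.Ioo (0 : ℝ) η,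
      ∀ i i' : Fin n, |D ε i i'| ≤ K) :
    ∃ ε0 > (0 : ℝ), ∃ M > (0 : ℝ), ∀ ε ∈ Set.Ioo (0 : ℝ) ε0,
      ∃ μ : Fin n → ℂ,
        ((((∑ k : Fin j, (ε ^ (r k : ℝ)) • Λ k) + (ε ^ (R : ℝ)) • D ε).map
            (algebraMap ℝ ℂ)).charpoly.roots = Finset.univ.val.map μ) ∧
        ∀ i : Fin n,
          ‖μ i - (((∑ k : Fin j, (ε ^ (r k : ℝ)) • Λ k) i i : ℝ) : ℂ)‖ ≤
            M * ε ^ (R : ℝ) := by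
  obtain ⟨K, hK, η, hη, hbdd⟩ := hDbdd
  set a : ℝ → Fin n → ℝ := fun ε i => ∑ k : Fin j, ε ^ ((r k : ℝ)) * Λ k i i with hadef
  have hdiagsum : ∀ ε : ℝ, (∑ k : Fin j, (ε ^ ((r k : ℝ))) • Λ k) = Matrix.diagonal (a ε) := by
    intro ε
    ext i i'
    rw [Matrix.sum_apply]
    by_cases h : i = i'
    · subst h
      rw [Matrix.diagonal_apply_eq]
      apply Finset.sum_congr rfl
      intro k _
      rw [Matrix.smul_apply, smul_eq_mul]
    · rw [Matrix.diagonal_apply_ne _ h]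
      apply Finset.sum_eq_zero
      intro k _
      rw [Matrix.smul_apply, hdiag k h, smul_zero]
  -- pairwise separation
  have hpair : ∀ i i' : Fin n, (∀ k, Λ k i i = Λ k i' i') ∨
      (∀ᶠ ε in nhdsWithin 0 (Set.Ioi 0),
        4 * (n * K * ε ^ ((R : ℝ))) < |a ε i - a ε i'|) := by
    intro i i'
    by_cases hall : ∀ k, Λ k i i = Λ k i' i'
    · exact Or.inl hall
    · right
      set c : Fin j → ℝ := fun k => Λ k i i - Λ k i' i' with hcdef
      have hSne : (Finset.univ.filter (fun k => c k ≠ 0)).Nonempty := by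
        push_neg at hall
        obtain ⟨k, hk⟩ := hall
        exact ⟨k, Finset.mem_filter.mpr ⟨Finset.mem_univ _, sub_ne_zero_of_ne hk⟩⟩
      set k0 : Fin j := (Finset.univ.filter (fun k => c k ≠ 0)).min' hSne with hk0def
      have hk0 : c k0 ≠ 0 :=
        (Finset.mem_filter.mp ((Finset.univ.filter (fun k => c k ≠ 0)).min'_mem hSne)).2
      have hk0le : ∀ k, c k ≠ 0 → k0 ≤ k := fun k hk =>
        Finset.min'_le _ k (Finset.mem_filter.mpr ⟨Finset.mem_univ _, hk⟩)
      set h : ℝ → ℝ := fun ε => ∑ k : Fin j, ε ^ (((r k : ℝ)) - ((r k0 : ℝ))) * c k with hhdef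
      have hdiff : ∀ ε > (0:ℝ), a ε i - a ε i' = ε ^ ((r k0 : ℝ)) * h ε := by
        intro ε hε
        rw [hadef, hhdef]
        simp only
        rw [← Finset.sum_sub_distrib, Finset.mul_sum]
        apply Finset.sum_congr rfl
        intro k _
        rw [← mul_sub]
        rw [show (Λ k i i - Λ k i' i') = c k from rfl]
        rw [← mul_assoc, ← Real.rpow_add hε]
        ring_nf
      have htends : Tendsto h (nhdsWithin 0 (Set.Ioi 0)) (nhds (c k0)) := by
        have hsum : Tendsto h (nhdsWithin 0 (Set.Ioi 0))
            (nhds (∑ k : Fin j, if k = k0 then c k0 else 0)) := by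
          rw [hhdef]
          apply tendsto_finset_sum
          intro k _
          by_cases hkk : k = k0
          · subst hkk
            simp only [if_pos rfl, sub_self, Real.rpow_zero, one_mul]
            exact tendsto_const_nhds
          · rw [if_neg hkk]
            by_cases hck : c k = 0
            · have : (fun ε : ℝ => ε ^ (((r k : ℝ)) - ((r k0 : ℝ))) * c k) = fun _ => 0 := by
                funext x
                rw [hck, mul_zero]
              rw [this]
              exact tendsto_const_nhds
            · have hklt : k0 < k := lt_of_le_of_ne (hk0le k hck) (Ne.symm hkk)
              have hexp : (0:ℝ) < ((r k : ℝ)) - ((r k0 : ℝ)) := by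
                have := hmono hklt
                rw [sub_pos]
                exact_mod_cast this
              have := (rpow_tendsto_zero hexp).mul_const (c k)
              rw [zero_mul] at this
              exact this
        rw [Finset.sum_ite_eq' Finset.univ k0 (fun _ => c k0)] at hsum
        simpa using hsum
      have hexpneg : ((r k0 : ℝ)) - ((R : ℝ)) < 0 := by
        rw [sub_neg]
        exact_mod_cast hrR k0
      have hcpos : 0 < |c k0| := abs_pos.mpr hk0
      have hratio : Tendsto (fun ε : ℝ => ε ^ (((r k0 : ℝ)) - ((R : ℝ))) * |h ε|)
          (nhdsWithin 0 (Set.Ioi 0)) atTop :=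
        (rpow_tendsto_atTop hexpneg).atTop_mul_pos hcpos htends.abs
      have hgt := hratio.eventually_gt_atTop (4 * (n * K))
      filter_upwards [hgt, self_mem_nhdsWithin] with ε h1 h2
      have hε : (0:ℝ) < ε := h2
      have hεR : (0:ℝ) < ε ^ ((R:ℝ)) := Real.rpow_pos_of_pos hε _
      have h3 := mul_lt_mul_of_pos_right h1 hεR
      have h4 : ε ^ (((r k0 : ℝ)) - ((R : ℝ))) * |h ε| * ε ^ ((R:ℝ))
          = ε ^ ((r k0 : ℝ)) * |h ε| := by
        rw [mul_comm (ε ^ (((r k0 : ℝ)) - ((R : ℝ)))) (|h ε|), mul_assoc,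
          ← Real.rpow_add hε]
        ring_nf
      rw [h4] at h3
      have h5 : |a ε i - a ε i'| = ε ^ ((r k0 : ℝ)) * |h ε| := by
        rw [hdiff ε hε, abs_mul, abs_of_pos (Real.rpow_pos_of_pos hε _)]
      rw [h5]
      calc 4 * (↑n * K * ε ^ ((R:ℝ))) = 4 * (↑n * K) * ε ^ ((R:ℝ)) := by ring
        _ < ε ^ ((r k0 : ℝ)) * |h ε| := h3
  -- combine eventualies
  have hsep_ev : ∀ᶠ ε in nhdsWithin 0 (Set.Ioi 0), ∀ i i' : Fin n,
      a ε i = a ε i' ∨ 4 * (n * K * ε ^ ((R:ℝ))) < |a ε i - a ε i'| := by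
    refine Filter.eventually_all.mpr fun i => Filter.eventually_all.mpr fun i' => ?_
    rcases hpair i i' with hcase | hev
    · apply Filter.Eventually.of_forall
      intro ε
      left
      rw [hadef]
      simp only
      apply Finset.sum_congr rfl
      intro k _
      rw [hcase k]
    · exact hev.mono fun ε hε => Or.inr hε
  have hηmem : Set.Ioo (0:ℝ) η ∈ nhdsWithin 0 (Set.Ioi 0) :=
    Ioo_mem_nhdsGT_of_mem (Set.mem_Ico.mpr ⟨le_rfl, hη⟩)
  have hcomb := hsep_ev.and hηmem
  obtain ⟨u, hu, hsub⟩ := mem_nhdsGT_iff_exists_Ioo_subset.mp hcomb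
  have hnK : (0:ℝ) < n * K := by
    have : (0:ℝ) < n := by exact_mod_cast Nat.lt_of_lt_of_le Nat.zero_lt_one hn
    positivity
  refine ⟨u, hu, n * K, hnK, ?_⟩
  intro ε hε
  obtain ⟨hsep', hεη⟩ := hsub hε
  have hεpos : (0:ℝ) < ε := hε.1
  have hεR : (0:ℝ) < ε ^ ((R:ℝ)) := Real.rpow_pos_of_pos hεpos _
  obtain ⟨μ, hμ1, hμ2⟩ := main_count hn (a ε) (D ε) K (ε ^ ((R:ℝ))) hK hεR
    (fun i i' => hbdd ε hεη i i') hsep'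
  refine ⟨μ, ?_, ?_⟩
  · rw [hdiagsum ε]
    exact hμ1
  · intro i
    have := hμ2 i
    rw [hdiagsum ε]
    rw [Matrix.diagonal_apply_eq]
    exact this
end
end
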